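/- arXiv:2510.26137 — 4 statements merged into one kernel-verified Lean document; each statement's English description precedes it below -/
import Mathlib

section
/- For every fixed integer n ≥ 2 and fixed integers i_1,…,i_{n−1} ≥ 1, there exist polynomials p, q ∈ ℚ[x] with q ≠ 0 and an integer g₀ such that for every integer g ≥ g₀ one has q(g) ≠ 0 and 𝒢^rg(g) = p(g)/q(g); i.e., 𝒢^rg(g) is a rational function of g for large g. -/
/-- Double factorial on naturals: `0!! = 1`, `1!! = 1`, `(k+2)!! = (k+2)·k!!`. -/
def df : ℕ → ℕ
  | 0 => 1
  | 1 => 1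
  | k + 2 => (k + 2) * df k

/-- Double factorial of an integer, with `z!! = 1` for `z ≤ 0` (so `(-1)!! = 0!! = 1`). -/
def dfacZ (z : ℤ) : ℤ := if z ≤ 0 then 1 else (df z.toNat : ℤ)

/-- The matrices `L_k`. -/
noncomputable def Lmat (k : ℕ) : Matrix (Fin 2) (Fin 2) ℝ :=
  if k = 0 then !![1, 0; 0, 0]
  else if k % 2 = 0 then !![(df (k - 1) : ℝ), 0; 0, -(df (k - 1) : ℝ)]
  else !![0, -(df k : ℝ); (df (k - 2) : ℝ), 0]

/-- `l_{k_1,…,k_m} = tr(L_{k_1}⋯L_{k_m})` if all indices are nonnegative, else `0`. -/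
noncomputable def lSeq (m : ℕ) (k : Fin m → ℤ) : ℝ :=
  if ∀ q, 0 ≤ k q then Matrix.trace ((List.ofFn fun q => Lmat (k q).toNat).prod) else 0

/-- The matrices `B_k`, with entries in `ℚ[N]`. -/
noncomputable def Bmat (k : ℕ) : Matrix (Fin 2) (Fin 2) (Polynomial ℚ) :=
  if k = 0 then !![1, 0; 0, 0]
  else if k % 2 = 0 then
    !![Polynomial.C ((df (k - 1) : ℚ) * (1 + (-1 : ℚ) ^ ((k - 2) / 2)) / (k : ℚ)) * Polynomial.X, 0;
       0, -(Polynomial.C ((df (k - 1) : ℚ) * (1 + (-1 : ℚ) ^ ((k - 2) / 2)) / (k : ℚ)) * Polynomial.X)]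
  else
    !![0, -(Polynomial.C ((df (k - 2) : ℚ)) * Polynomial.X);
       Polynomial.C ((df (k - 2) : ℚ) * (-1 : ℚ) ^ ((k - 1) / 2)), 0]

/-- `b_{k_1,…,k_m} = [N^1] tr(B_{k_1}⋯B_{k_m})` if all indices are nonnegative, else `0`. -/
noncomputable def bSeq (m : ℕ) (k : Fin m → ℤ) : ℚ :=
  if ∀ q, 0 ≤ k q then (Matrix.trace ((List.ofFn fun q => Bmat (k q).toNat).prod)).coeff 1 else 0

/-- `J_{σ,q}(j)`: `-j-1` if `σ(q) < σ(q+1)`, and `j` if `σ(q) > σ(q+1)` (indices cyclic). -/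
def Jfun {m : ℕ} [NeZero m] (σ : Equiv.Perm (Fin m)) (q : Fin m) (j : ℕ) : ℤ :=
  if σ q < σ (q + 1) then -(j : ℤ) - 1 else (j : ℤ)

/-- `K_{i,σ,q}(j) = i_{σ(q)} + J_{σ,q}(j_q) − J_{σ,q−1}(j_{q−1})`, indices cyclic. -/
def Kfun {m : ℕ} [NeZero m] (i : Fin m → ℤ) (σ : Equiv.Perm (Fin m)) (j : Fin m → ℕ)
    (q : Fin m) : ℤ :=
  i (σ q) + Jfun σ q (j q) - Jfun σ (q - 1) (j (q - 1))

/-- `m(σ) = #{q : σ(q+1) < σ(q)}` (indices cyclic). -/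
def mcount {m : ℕ} [NeZero m] (σ : Equiv.Perm (Fin m)) : ℕ :=
  (Finset.univ.filter fun q : Fin m => σ (q + 1) < σ q).card

/-- The normalized enumeration `𝒢^og` of ordinary graphs, via Lemma 2.2:
`𝒢^og(g) = (1/(m·(2g+2m−3)!!)) Σ_σ (−1)^{m(σ)+1} Σ_j l_{K_{i,σ,1}(j),…,K_{i,σ,m}(j)}`. -/
noncomputable def Gog (m : ℕ) [NeZero m] (i : Fin m → ℤ) (g : ℤ) : ℝ :=
  (1 / ((m : ℝ) * (dfacZ (2 * g + 2 * m - 3) : ℝ))) *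
    ∑ σ : Equiv.Perm (Fin m), (-1 : ℝ) ^ (mcount σ + 1) *
      ∑' j : Fin m → ℕ, lSeq m (Kfun i σ j)

/-- The normalized enumeration `𝒢^rg` of ribbon graphs with one face, via Lemma 3.1:
`𝒢^rg(g) = (1/(2m·(4g+2m−5)!!)) Σ_σ (−1)^{m(σ)+1} Σ_j b_{K_{i,σ,1}(j),…,K_{i,σ,m}(j)}`. -/
noncomputable def Grg (m : ℕ) [NeZero m] (i : Fin m → ℤ) (g : ℤ) : ℝ :=
  (1 / (2 * (m : ℝ) * (dfacZ (4 * g + 2 * m - 5) : ℝ))) *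
    ∑ σ : Equiv.Perm (Fin m), (-1 : ℝ) ^ (mcount σ + 1) *
      ∑' j : Fin m → ℕ, ((bSeq m (Kfun i σ j) : ℚ) : ℝ)

/-- `σ ∈ S_{n+2}^{(r,n+2−r)}`: unimodal permutations of `{0,…,n+1}` fixing the last point,
strictly decreasing on positions `0,…,n+1−r` down to the value `0`, then strictly increasing
on positions `n+1−r,…,n+1` up to the value `n+1`. -/
def SPerm (n r : ℕ) (σ : Equiv.Perm (Fin (n + 2))) : Prop :=
  σ (Fin.last (n + 1)) = Fin.last (n + 1) ∧
  σ ⟨n + 1 - r, by omega⟩ = ⟨0, by omega⟩ ∧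
  (∀ a b : Fin (n + 2), a < b → b.val ≤ n + 1 - r → σ b < σ a) ∧
  (∀ a b : Fin (n + 2), n + 1 - r ≤ a.val → a < b → σ a < σ b)

/-- `σ ∈ S_{n+2}^{{2}} = ∪_{r=1}^{n+1} S_{n+2}^{(r,n+2−r)}`. -/
def inS2 (n : ℕ) (σ : Equiv.Perm (Fin (n + 2))) : Prop :=
  ∃ r, 1 ≤ r ∧ r ≤ n + 1 ∧ SPerm n r σ

open Polynomial Filter

/-!
Only the last vertex depends on `g`: its valency `4g + a` enters the single index `K_{q₀}`,
`σ q₀ = n`, as `4g + c`. Nonnegativity of the other indices confines `j` to a box independent of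
`g`, so each series is a finite sum. In each term, `B_{4g+c}` is the scalar `(4g+c-1)!!/(4g+c)` or
`(4g+c-2)!!` (by parity of `c`) times a matrix that only depends on `c mod 4`, and a quotient of two
double factorials of arguments `4g + a`, `4g + b` with `a ≡ b mod 2` is a polynomial in `g` or the
inverse of one.
-/

/-- The denominator is cleared; `exists_eq_div` recovers the quotient, since `q` has only finitely
many integer roots. -/
def IsEventuallyRational (f : ℤ → ℚ) : Prop :=
  ∃ p q : ℚ[X], q ≠ 0 ∧ ∀ᶠ g : ℤ in atTop, f g * q.eval (g : ℚ) = p.eval (g : ℚ)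

theorem Polynomial.eventually_eval_intCast_ne_zero {q : ℚ[X]} (hq : q ≠ 0) :
    ∀ᶠ g : ℤ in atTop, q.eval (g : ℚ) ≠ 0 := by
  have hfin : {g : ℤ | q.IsRoot (g : ℚ)}.Finite :=
    (q.roots.toFinset.finite_toSet.preimage Int.cast_injective.injOn).subset
      fun g hg => by simpa [hq] using hg
  exact atTop_le_cofinite hfin.eventually_cofinite_notMem

namespace IsEventuallyRational

variable {f f' : ℤ → ℚ}

theorem congr (hf : IsEventuallyRational f) (h : f =ᶠ[atTop] f') : IsEventuallyRational f' := by
  obtain ⟨p, q, hq, hpq⟩ := hf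
  exact ⟨p, q, hq, (hpq.and h).mono fun g ⟨hg, hfg⟩ => hfg ▸ hg⟩

theorem polynomial (p : ℚ[X]) : IsEventuallyRational fun g => p.eval (g : ℚ) :=
  ⟨p, 1, one_ne_zero, .of_forall fun g => by simp⟩

theorem const (a : ℚ) : IsEventuallyRational fun _ => a := by
  simpa using polynomial (C a)

theorem add (hf : IsEventuallyRational f) (hf' : IsEventuallyRational f') :
    IsEventuallyRational (f + f') := by
  obtain ⟨p, q, hq, hpq⟩ := hf
  obtain ⟨p', q', hq', hpq'⟩ := hf'
  refine ⟨p * q' + p' * q, q * q', mul_ne_zero hq hq', (hpq.and hpq').mono fun g ⟨h, h'⟩ => ?_⟩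
  simp only [Pi.add_apply, eval_add, eval_mul, ← h, ← h']
  ring

theorem mul (hf : IsEventuallyRational f) (hf' : IsEventuallyRational f') :
    IsEventuallyRational (f * f') := by
  obtain ⟨p, q, hq, hpq⟩ := hf
  obtain ⟨p', q', hq', hpq'⟩ := hf'
  refine ⟨p * p', q * q', mul_ne_zero hq hq', (hpq.and hpq').mono fun g ⟨h, h'⟩ => ?_⟩
  simp only [Pi.mul_apply, eval_mul, ← h, ← h']
  ring

theorem inv (hf : IsEventuallyRational f) : IsEventuallyRational f⁻¹ := by
  obtain ⟨p, q, hq, hpq⟩ := hf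
  by_cases hp : p = 0
  · refine (const 0).congr ((hpq.and (eventually_eval_intCast_ne_zero hq)).mono ?_)
    rintro g ⟨h, hqg⟩
    simp_all
  refine ⟨q, p, hp, (hpq.and (eventually_eval_intCast_ne_zero hp)).mono ?_⟩
  rintro g ⟨h, hpg⟩
  have hfg : f g ≠ 0 := by rintro h0; simp_all
  simp only [Pi.inv_apply, ← h]
  field_simp

theorem div (hf : IsEventuallyRational f) (hf' : IsEventuallyRational f') :
    IsEventuallyRational (f / f') := by
  simpa only [div_eq_mul_inv] using hf.mul hf'.inv

theorem sum {ι : Type*} (s : Finset ι) {F : ι → ℤ → ℚ}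
    (hF : ∀ x ∈ s, IsEventuallyRational (F x)) :
    IsEventuallyRational fun g => ∑ x ∈ s, F x g := by
  classical
  induction s using Finset.induction_on with
  | empty => simpa using const 0
  | insert x s hx ih =>
    simp only [Finset.sum_insert hx]
    exact (hF x (s.mem_insert_self x)).add (ih fun y hy => hF y (Finset.mem_insert_of_mem hy))

theorem exists_eq_div (hf : IsEventuallyRational f) :
    ∃ (p q : ℚ[X]) (g₀ : ℤ), q ≠ 0 ∧ ∀ g, g₀ ≤ g →
      q.eval (g : ℚ) ≠ 0 ∧ f g = p.eval (g : ℚ) / q.eval (g : ℚ) := by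
  obtain ⟨p, q, hq, hpq⟩ := hf
  obtain ⟨g₀, h⟩ := eventually_atTop.mp (hpq.and (eventually_eval_intCast_ne_zero hq))
  refine ⟨p, q, g₀, hq, fun g hg => ?_⟩
  obtain ⟨hfg, hqg⟩ := h g hg
  exact ⟨hqg, by rw [← hfg, mul_div_cancel_right₀ _ hqg]⟩

end IsEventuallyRational

theorem dfacZ_of_nonneg {z : ℤ} (hz : 0 ≤ z) : dfacZ z = df z.toNat := by
  unfold dfacZ
  split_ifs with h
  · obtain rfl : z = 0 := le_antisymm h hz
    rfl
  · rfl

theorem dfacZ_pos (z : ℤ) : 0 < dfacZ z := by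
  have df_pos : ∀ k, 0 < df k := fun k => by
    induction k using Nat.twoStepInduction <;> simp [df, *]
  unfold dfacZ
  split_ifs
  exacts [one_pos, mod_cast df_pos _]

theorem dfacZ_add_two {z : ℤ} (hz : -1 ≤ z) : dfacZ (z + 2) = (z + 2) * dfacZ z := by
  rcases hz.eq_or_lt with rfl | hz
  · decide
  rw [dfacZ_of_nonneg (by omega), show (z + 2).toNat = z.toNat + 2 by omega, df,
    dfacZ_of_nonneg (by omega)]
  push_cast
  rw [Int.toNat_of_nonneg (by omega)]

theorem isEventuallyRational_dfacZ_add_div (b : ℤ) (k : ℕ) :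
    IsEventuallyRational fun g => (dfacZ (4 * g + (b + 2 * k)) : ℚ) / dfacZ (4 * g + b) := by
  induction k with
  | zero =>
    refine (IsEventuallyRational.const 1).congr (.of_forall fun g => ?_)
    simp [(dfacZ_pos _).ne']
  | succ k ih =>
    refine ((IsEventuallyRational.polynomial (4 * X + C (b + 2 * k + 2 : ℚ))).mul ih).congr
      ((eventually_ge_atTop |b|).mono fun g hg => ?_)
    have hb := neg_abs_le b
    have hb' := abs_nonneg b
    simp only [Pi.mul_apply, eval_add, eval_mul, eval_X, eval_C, eval_ofNat]
    rw [show 4 * g + (b + 2 * (k + 1 : ℕ)) = 4 * g + (b + 2 * k) + 2 by push_cast; ring,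
      dfacZ_add_two (by omega)]
    push_cast
    ring

theorem isEventuallyRational_dfacZ_div {a b : ℤ} (hab : a % 2 = b % 2) :
    IsEventuallyRational fun g => (dfacZ (4 * g + a) : ℚ) / dfacZ (4 * g + b) := by
  rcases le_total b a with h | h
  · obtain ⟨k, rfl⟩ : ∃ k : ℕ, a = b + 2 * k := ⟨((a - b) / 2).toNat, by omega⟩
    exact isEventuallyRational_dfacZ_add_div b k
  · obtain ⟨k, rfl⟩ : ∃ k : ℕ, b = a + 2 * k := ⟨((b - a) / 2).toNat, by omega⟩
    simpa only [Pi.inv_def, inv_div] using (isEventuallyRational_dfacZ_add_div a k).inv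

def Bscale (k : ℕ) : ℚ :=
  if k % 2 = 0 then df (k - 1) / k else df (k - 2)

noncomputable def Bshape (k : ℕ) : Matrix (Fin 2) (Fin 2) ℚ[X] :=
  if k % 2 = 0 then (1 + (-1 : ℚ) ^ ((k - 2) / 2)) • !![X, 0; 0, -X]
  else !![0, -X; C ((-1 : ℚ) ^ ((k - 1) / 2)), 0]

theorem Bmat_eq_smul {k : ℕ} (hk : k ≠ 0) : Bmat k = Bscale k • Bshape k := by
  unfold Bmat Bscale Bshape
  rw [if_neg hk]
  split_ifs <;> refine Matrix.ext fun a b => ?_ <;> fin_cases a <;> fin_cases b <;>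
    simp only [Matrix.of_apply, Matrix.smul_apply, Matrix.cons_val', Matrix.cons_val_zero,
      Matrix.cons_val_one, Matrix.cons_val_fin_one, Fin.zero_eta, Fin.mk_one, Fin.isValue,
      smul_eq_C_mul, div_eq_mul_inv, C_mul, map_natCast, map_add, map_one, map_pow, map_neg,
      smul_zero, smul_neg] <;> ring

theorem Bshape_congr {k k' : ℕ} (hk : k ≠ 0) (hk' : k' ≠ 0) (h : k % 4 = k' % 4) :
    Bshape k = Bshape k' := by
  unfold Bshape
  rw [show k' % 2 = k % 2 by omega]
  split_ifs
  · rw [neg_one_pow_eq_pow_mod_two, neg_one_pow_eq_pow_mod_two (n := (k' - 2) / 2),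
      show (k - 2) / 2 % 2 = (k' - 2) / 2 % 2 by omega]
  · rw [neg_one_pow_eq_pow_mod_two, neg_one_pow_eq_pow_mod_two (n := (k' - 1) / 2),
      show (k - 1) / 2 % 2 = (k' - 1) / 2 % 2 by omega]

theorem isEventuallyRational_Bscale_div (c : ℤ) {b : ℤ} (hb : b % 2 = 1) :
    IsEventuallyRational fun g => Bscale (4 * g + c).toNat / dfacZ (4 * g + b) := by
  have hc := neg_abs_le c
  have hc' := abs_nonneg c
  rcases Int.emod_two_eq_zero_or_one c with hpar | hpar
  · refine ((isEventuallyRational_dfacZ_div (a := c - 1) (b := b) (by omega)).div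
      (IsEventuallyRational.polynomial (4 * X + C (c : ℚ)))).congr
      ((eventually_ge_atTop (|c| + 1)).mono fun g hg => ?_)
    have hdf : (df ((4 * g + c).toNat - 1) : ℚ) = dfacZ (4 * g + (c - 1)) := by
      rw [dfacZ_of_nonneg (by omega), show (4 * g + (c - 1)).toNat = (4 * g + c).toNat - 1 by omega]
      rfl
    have hcast : (((4 * g + c).toNat : ℕ) : ℚ) = 4 * g + c := by
      exact_mod_cast Int.toNat_of_nonneg (by omega : 0 ≤ 4 * g + c)
    simp only [Bscale, show (4 * g + c).toNat % 2 = 0 by omega, if_true, hdf, hcast, Pi.div_apply,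
      eval_add, eval_mul, eval_C, eval_X, eval_ofNat]
    ring
  · refine (isEventuallyRational_dfacZ_div (a := c - 2) (b := b) (by omega)).congr
      ((eventually_ge_atTop (|c| + 1)).mono fun g hg => ?_)
    have hdf : (df ((4 * g + c).toNat - 2) : ℚ) = dfacZ (4 * g + (c - 2)) := by
      rw [dfacZ_of_nonneg (by omega), show (4 * g + (c - 2)).toNat = (4 * g + c).toNat - 2 by omega]
      rfl
    simp only [Bscale, show (4 * g + c).toNat % 2 ≠ 0 by omega, if_false, hdf]

theorem List.prod_ofFn_smul {R A : Type*} [CommMonoid R] [Monoid A] [MulAction R A]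
    [IsScalarTower R A A] [SMulCommClass R A A] :
    ∀ {n : ℕ} (c : Fin n → R) (F : Fin n → A),
      (List.ofFn fun q => c q • F q).prod = (∏ q, c q) • (List.ofFn F).prod
  | 0, _, _ => by simp
  | n + 1, c, F => by
    rw [List.ofFn_succ, List.ofFn_succ, List.prod_cons, List.prod_cons,
      List.prod_ofFn_smul (n := n), Fin.prod_univ_succ, smul_mul_smul_comm]

theorem bSeq_update {n : ℕ} (k : Fin n → ℤ) (q : Fin n) {x : ℤ} (hk : ∀ p ≠ q, 0 ≤ k p)
    (hx : 1 ≤ x) :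
    bSeq n (Function.update k q x) = Bscale x.toNat *
      ((List.ofFn (Function.update (fun p => Bmat (k p).toNat) q (Bshape x.toNat))).prod.trace).coeff 1 := by
  classical
  have hnonneg : ∀ p, 0 ≤ Function.update k q x p := fun p => by
    rcases eq_or_ne p q with rfl | hp
    · simp only [Function.update_self]; omega
    · simpa [hp] using hk p hp
  have hfactors : (fun p => Bmat (Function.update k q x p).toNat) = fun p =>
      (Pi.mulSingle q (Bscale x.toNat) : Fin n → ℚ) p •
        Function.update (fun p => Bmat (k p).toNat) q (Bshape x.toNat) p := by
    funext p
    rcases eq_or_ne p q with rfl | hp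
    · simpa using Bmat_eq_smul (by omega)
    · simp [hp]
  rw [bSeq, if_pos hnonneg, hfactors, List.prod_ofFn_smul, Fintype.prod_pi_mulSingle',
    Matrix.trace_smul, coeff_smul, smul_eq_mul]

theorem Kfun_snoc_add {n : ℕ} (i : Fin n → ℤ) (σ : Equiv.Perm (Fin (n + 1))) (j : Fin (n + 1) → ℕ)
    (d a : ℤ) :
    Kfun (Fin.snoc i (d + a)) σ j = Function.update (Kfun (Fin.snoc i a) σ j)
      (σ.symm (Fin.last n)) (d + Kfun (Fin.snoc i a) σ j (σ.symm (Fin.last n))) := by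
  funext q
  rcases eq_or_ne q (σ.symm (Fin.last n)) with rfl | hq
  · simp only [Kfun, Function.update_self, Equiv.apply_symm_apply, Fin.snoc_last]
    ring
  · obtain ⟨p, hp⟩ := Fin.exists_castSucc_eq.mpr fun h : σ q = Fin.last n =>
      hq (σ.eq_symm_apply.mpr h)
    simp only [Kfun, Function.update_of_ne hq, ← hp, Fin.snoc_castSucc]

open Fin.NatCast Fin.CommRing in
/-- Along the cycle `q₀, q₀ + 1, …` with `σ q₀ = n`, each `K ≥ 0` gives `J_{q-1} ≤ I + J_q`;
since `J_{q₀} ≥ 0` and `J_{q₀-1} ≤ -1`, every `J_q` lies in `[-nI, nI)`. -/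
theorem le_of_Kfun_nonneg {n : ℕ} (hn : n ≠ 0) (iv : Fin (n + 1) → ℤ) {I : ℤ} (hI : 0 ≤ I)
    (hiv : ∀ v ≠ Fin.last n, iv v ≤ I) (σ : Equiv.Perm (Fin (n + 1))) (j : Fin (n + 1) → ℕ)
    (hK : ∀ q ≠ σ.symm (Fin.last n), 0 ≤ Kfun iv σ j q) (q : Fin (n + 1)) :
    (j q : ℤ) ≤ n * I := by
  set q₀ := σ.symm (Fin.last n)
  have hσq₀ : σ q₀ = Fin.last n := σ.apply_symm_apply _
  have hcast_ne : ∀ s : ℕ, 0 < s → s ≤ n → q₀ + (s : Fin (n + 1)) ≠ q₀ := fun s h0 hs h => by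
    have := congrArg Fin.val (add_eq_left.mp h)
    simp only [Fin.val_natCast, Nat.mod_eq_of_lt (Nat.lt_succ_of_le hs), Fin.coe_ofNat_eq_mod,
      Nat.zero_mod] at this
    omega
  let T : ℕ → ℤ := fun s => Jfun σ (q₀ + s) (j (q₀ + s))
  have hstep : ∀ s < n, T s ≤ I + T (s + 1) := fun s hs => by
    have hne := hcast_ne (s + 1) s.succ_pos hs
    have hKs := hK _ hne
    have hivs := hiv _ fun h => hne (σ.eq_symm_apply.mpr h)
    rw [Kfun, show q₀ + ((s + 1 : ℕ) : Fin (n + 1)) - 1 = q₀ + (s : Fin (n + 1)) by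
      push_cast; ring] at hKs
    simp only [T]
    omega
  have hchain : ∀ s t, s ≤ t → t ≤ n → T s ≤ (t - s : ℤ) * I + T t := fun s t hst htn => by
    induction t, hst using Nat.le_induction with
    | base => simp
    | succ t hst ih =>
      have := hstep t htn
      have := ih (by omega)
      push_cast
      linarith
  have hT0 : 0 ≤ T 0 := by
    simp only [T, Nat.cast_zero, add_zero, Jfun, hσq₀, not_lt.mpr (Fin.le_last _), if_false]
    positivity
  have hTn : T n ≤ -1 := by
    have hwrap : q₀ + (n : Fin (n + 1)) + 1 = q₀ := by
      rw [add_assoc, ← Nat.cast_succ, Fin.natCast_self, add_zero]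
    have hlt : σ (q₀ + n) < σ (q₀ + n + 1) := by
      rw [hwrap, hσq₀]
      exact (Fin.le_last _).lt_of_ne fun h =>
        hcast_ne n (Nat.pos_of_ne_zero hn) le_rfl (σ.eq_symm_apply.mpr h)
    simp only [T, Jfun, if_pos hlt]
    omega
  obtain ⟨s, hs, rfl⟩ : ∃ s ≤ n, q₀ + (s : Fin (n + 1)) = q :=
    ⟨(q - q₀ : Fin (n + 1)), Nat.le_of_lt_succ (q - q₀).2, by simp⟩
  have hsI : 0 ≤ (s : ℤ) * I ∧ (s : ℤ) * I ≤ n * I :=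
    ⟨by positivity, mul_le_mul_of_nonneg_right (by exact_mod_cast hs) hI⟩
  have hlow : -(s * I) ≤ T s := by
    have := hchain 0 s (Nat.zero_le s) hs
    push_cast at this
    linarith
  have hhigh : T s ≤ n * I - s * I - 1 := by linarith [hchain s n hs le_rfl]
  simp only [T, Jfun] at hlow hhigh
  split_ifs at hlow hhigh <;> linarith

theorem isEventuallyRational_bSeq_div {n : ℕ} (i : Fin n → ℤ) (a : ℤ)
    (σ : Equiv.Perm (Fin (n + 1))) (j : Fin (n + 1) → ℕ) {b : ℤ} (hb : b % 2 = 1) :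
    IsEventuallyRational fun g =>
      bSeq (n + 1) (Kfun (Fin.snoc i (4 * g + a)) σ j) / dfacZ (4 * g + b) := by
  simp only [Kfun_snoc_add]
  set k := Kfun (Fin.snoc i a) σ j
  set q := σ.symm (Fin.last n)
  by_cases hk : ∀ p ≠ q, 0 ≤ k p
  · set c := k q
    have hc := neg_abs_le c
    have hc' := abs_nonneg c
    set g₀ := |c| + 1
    set r := ((List.ofFn (Function.update (fun p => Bmat (k p).toNat) q
      (Bshape (4 * g₀ + c).toNat))).prod.trace).coeff 1
    refine ((IsEventuallyRational.const r).mul (isEventuallyRational_Bscale_div c hb)).congr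
      ((eventually_ge_atTop g₀).mono fun g hg => ?_)
    dsimp only [Pi.mul_apply]
    rw [bSeq_update k q hk (by omega),
      Bshape_congr (k' := (4 * g₀ + c).toNat) (by omega) (by omega) (by omega)]
    ring
  · obtain ⟨p, hpq, hp⟩ : ∃ p ≠ q, k p < 0 := by simpa using hk
    refine (IsEventuallyRational.const 0).congr (.of_forall fun g => ?_)
    dsimp only
    rw [bSeq, if_neg fun h => by simpa [Function.update_of_ne hpq, hp.not_ge] using h p,
      zero_div]

theorem tsum_bSeq_Kfun_eq_sum {n : ℕ} (hn : n ≠ 0) {i : Fin n → ℤ} (hi : ∀ p, 1 ≤ i p) (a : ℤ)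
    (σ : Equiv.Perm (Fin (n + 1))) :
    ∑' j : Fin (n + 1) → ℕ, ((bSeq (n + 1) (Kfun (Fin.snoc i a) σ j) : ℚ) : ℝ) =
      ∑ j ∈ Fintype.piFinset fun _ => Finset.Iic (n * ∑ p, i p).toNat,
        ((bSeq (n + 1) (Kfun (Fin.snoc i a) σ j) : ℚ) : ℝ) := by
  refine tsum_eq_sum fun j hj => ?_
  obtain ⟨q, hq⟩ : ∃ q, (n * ∑ p, i p).toNat < j q := by
    simpa [Fintype.mem_piFinset] using hj
  have hiv : ∀ v ≠ Fin.last n, (Fin.snoc i a : Fin (n + 1) → ℤ) v ≤ ∑ p, i p := fun v hv => by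
    obtain ⟨p, rfl⟩ := Fin.exists_castSucc_eq.mpr hv
    rw [Fin.snoc_castSucc]
    exact Finset.single_le_sum (fun p _ => (zero_lt_one.trans_le (hi p)).le) (Finset.mem_univ p)
  have hI : 0 ≤ ∑ p, i p := Finset.sum_nonneg fun p _ => (zero_lt_one.trans_le (hi p)).le
  rw [bSeq, if_neg fun hK => ?_, Rat.cast_zero]
  have := le_of_Kfun_nonneg hn _ hI hiv σ j (fun q _ => hK q) q
  omega

/-- **Theorem 1.5** (paper `n = m+2 ≥ 2`): for fixed `i_1,…,i_{n−1} ≥ 1`, the normalized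
enumeration `𝒢^rg_{i_1,…,i_{n−1},4g+2n−2−|i|}(g)` is, for large `g`, a rational function of `g`:
there are `p, q ∈ ℚ[x]`, `q ≠ 0`, and `g₀ ∈ ℤ` with `q(g) ≠ 0` and `𝒢^rg(g) = p(g)/q(g)`
for all `g ≥ g₀`. -/
theorem GUE_ribbon_graphs_rationality (m : ℕ) (i : Fin (m + 1) → ℤ)
    (hi : ∀ p, 1 ≤ i p) :
    ∃ (p q : Polynomial ℚ) (g₀ : ℤ), q ≠ 0 ∧ ∀ g : ℤ, g₀ ≤ g →
      Polynomial.eval (g : ℚ) q ≠ 0 ∧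
      Grg (m + 2) (Fin.snoc i (4 * g + 2 * (m + 2 : ℕ) - 2 - ∑ p, i p)) g =
        ((Polynomial.eval (g : ℚ) p : ℚ) : ℝ) / ((Polynomial.eval (g : ℚ) q : ℚ) : ℝ) := by
  set A : ℤ := 2 * (m + 2 : ℕ) - 2 - ∑ p, i p with hA
  set box := Fintype.piFinset fun _ : Fin (m + 2) => Finset.Iic ((m + 1) * ∑ p, i p).toNat
  set F : ℤ → ℚ := fun g => (2 * (m + 2 : ℕ) : ℚ)⁻¹ * ∑ σ : Equiv.Perm (Fin (m + 2)),
    (-1) ^ (mcount σ + 1) * ∑ j ∈ box,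
      bSeq (m + 2) (Kfun (Fin.snoc i (4 * g + A)) σ j) / dfacZ (4 * g + (2 * (m + 2 : ℕ) - 5))
  have hF : IsEventuallyRational F :=
    (IsEventuallyRational.const _).mul (.sum _ fun σ _ => (IsEventuallyRational.const _).mul
      (.sum _ fun j _ => isEventuallyRational_bSeq_div i A σ j (by omega)))
  have hGrg : ∀ g, Grg (m + 2) (Fin.snoc i (4 * g + 2 * (m + 2 : ℕ) - 2 - ∑ p, i p)) g = F g := by
    intro g
    rw [Grg, show 4 * g + 2 * ((m + 2 : ℕ) : ℤ) - 2 - ∑ p, i p = 4 * g + A by rw [hA]; ring,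
      show 4 * g + 2 * ((m + 2 : ℕ) : ℤ) - 5 = 4 * g + (2 * ((m + 2 : ℕ) : ℤ) - 5) by ring]
    simp only [tsum_bSeq_Kfun_eq_sum m.add_one_ne_zero hi, F, box]
    push_cast
    simp only [Finset.mul_sum, one_div, mul_inv]
    refine Finset.sum_congr rfl fun σ _ => Finset.sum_congr rfl fun j _ => ?_
    ring
  obtain ⟨p, q, g₀, hq, h⟩ := hF.exists_eq_div
  exact ⟨p, q, g₀, hq, fun g hg => ⟨(h g hg).1, by rw [hGrg, (h g hg).2, Rat.cast_div]⟩⟩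
end

section
/- Let n ≥ 2, let σ be a permutation of {1,…,n}, and let λ_1,…,λ_n be nonzero complex numbers with |λ_1| > |λ_2| > ⋯ > |λ_n| > 0. Then the family indexed by j = (j_1,…,j_n) ∈ (ℤ_{≥0})^n with terms ∏_{q=1}^{n} λ_{σ(q)}^{J_{σ,q}(j_q) − J_{σ,q−1}(j_{q−1}) − 1} (integer exponents; cyclic conventions j_0 := j_n, σ(0) := σ(n)) is summable, and its sum equals (−1)^{m(σ)} / ∏_{q=1}^{n} (λ_{σ(q)} − λ_{σ(q+1)}), where σ(n+1) := σ(1). Equivalently, the Laurent expansion of P(σ; λ_1,…,λ_n) = 1/∏_{q=1}^{n}(λ_{σ(q)} − λ_{σ(q+1)}) around ∞ in the region |λ_1| > ⋯ > |λ_n| is (−1)^{m(σ)} Σ_{j_1,…,j_n ≥ 0} ∏_{q=1}^{n} λ_{σ(q)}^{J_{σ,q}(j_q) − J_{σ,q−1}(j_{q−1}) − 1}. -/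
/-! Each factor `1 / (λ_{σ(q)} - λ_{σ(q+1)})` is a geometric series in the ratio of the smaller
to the larger modulus, carrying a sign `-1` exactly when `σ(q) > σ(q+1)`; `J_{σ,q}(j)` is the
exponent for which its `j`-th term is `λ_{σ(q)}^{J} λ_{σ(q+1)}^{-J-1}`. These `n` series converge
absolutely, so their product is the sum over `j ∈ ℕⁿ` of the products of terms, and collecting the
powers of each `λ_{σ(q)}` around the cycle gives the exponent `J_{σ,q}(j_q) - J_{σ,q-1}(j_{q-1}) - 1`.
-/

section PiProduct

variable {𝕜 β : Type*} [RCLike 𝕜]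

theorem HasSum.fin_pi_prod {n : ℕ} {f : Fin n → β → 𝕜} {s : Fin n → 𝕜}
    (h : ∀ i, HasSum (f i) (s i)) : HasSum (fun j : Fin n → β => ∏ i, f i (j i)) (∏ i, s i) := by
  induction n with
  | zero => simp
  | succ n ih =>
    have hTail := ih fun i => h i.succ
    have hNorm : Summable fun x : β × (Fin n → β) => f 0 x.1 * ∏ i, f i.succ (x.2 i) :=
      ((summable_norm_iff.mpr (h 0).summable).mul_norm
        (summable_norm_iff.mpr hTail.summable)).of_norm
    have hProd := (h 0).mul hTail hNorm
    rw [Fin.prod_univ_succ, ← (Fin.consEquiv fun _ => β).hasSum_iff]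
    refine hProd.congr_fun fun x => ?_
    simp only [Function.comp_apply, Fin.consEquiv_apply, Fin.prod_univ_succ, Fin.cons_zero,
      Fin.cons_succ]

theorem HasSum.pi_prod {ι : Type*} [Fintype ι] {f : ι → β → 𝕜} {s : ι → 𝕜}
    (h : ∀ i, HasSum (f i) (s i)) : HasSum (fun j : ι → β => ∏ i, f i (j i)) (∏ i, s i) := by
  let e := Fintype.equivFin ι
  have hFin := HasSum.fin_pi_prod fun k => h (e.symm k)
  rw [← e.symm.prod_comp s, ← (Equiv.arrowCongr e (Equiv.refl β)).symm.hasSum_iff]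
  refine hFin.congr_fun fun j => Fintype.prod_equiv e _ _ fun i => ?_
  simp

end PiProduct

theorem hasSum_zpow_neg_sub_one_mul_zpow {K : Type*} [NormedField K] {a b : K}
    (hab : ‖b‖ < ‖a‖) :
    HasSum (fun j : ℕ => a ^ (-(j : ℤ) - 1) * b ^ (j : ℤ)) (a - b)⁻¹ := by
  have ha_pos : 0 < ‖a‖ := (norm_nonneg b).trans_lt hab
  have ha : a ≠ 0 := norm_pos_iff.mp ha_pos
  have hr : ‖b / a‖ < 1 := by rwa [norm_div, div_lt_one ha_pos]
  have hsum : a⁻¹ * (1 - b / a)⁻¹ = (a - b)⁻¹ := by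
    rw [← mul_inv, mul_sub, mul_one, mul_div_cancel₀ b ha]
  rw [← hsum]
  refine ((hasSum_geometric_of_norm_lt_one hr).mul_left a⁻¹).congr_fun fun j => ?_
  rw [div_pow, zpow_sub₀ ha, zpow_neg, zpow_natCast, zpow_natCast, zpow_one]
  field_simp

theorem Fin.prod_zpow_mul_zpow_add_one {n : ℕ} [NeZero n] {G₀ : Type*} [CommGroupWithZero G₀]
    (x : Fin n → G₀) (hx : ∀ q, x q ≠ 0) (e : Fin n → ℤ) :
    ∏ q, x q ^ e q * x (q + 1) ^ (-e q - 1) = ∏ q, x q ^ (e q - e (q - 1) - 1) := by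
  have hShift : ∏ q, x (q + 1) ^ (-e q - 1) = ∏ q, x q ^ (-e (q - 1) - 1) :=
    Fintype.prod_equiv (Equiv.addRight 1) _ _ fun q => by simp
  rw [Finset.prod_mul_distrib, hShift, ← Finset.prod_mul_distrib]
  refine Finset.prod_congr rfl fun q _ => ?_
  rw [← zpow_add₀ (hx q)]
  ring_nf

theorem prod_sign_mul_inv_eq_neg_one_pow_mcount_div {n : ℕ} [NeZero n] {K : Type*} [Field K]
    (σ : Equiv.Perm (Fin n)) (d : Fin n → K) :
    ∏ q, (if σ (q + 1) < σ q then -1 else 1) * (d q)⁻¹ = (-1) ^ mcount σ / ∏ q, d q := by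
  rw [Finset.prod_mul_distrib, Finset.prod_inv_distrib, Finset.prod_ite, Finset.prod_const,
    Finset.prod_const_one, mul_one, div_eq_mul_inv]
  rfl

theorem hasSum_zpow_Jfun_mul_zpow_Jfun {n : ℕ} [NeZero n] {K : Type*} [NormedField K]
    (σ : Equiv.Perm (Fin n)) {lam : Fin n → K}
    (hlam : StrictAnti fun i => ‖lam i‖) {q : Fin n} (hq : σ q ≠ σ (q + 1)) :
    HasSum (fun j : ℕ => lam (σ q) ^ Jfun σ q j * lam (σ (q + 1)) ^ (-Jfun σ q j - 1))
      ((if σ (q + 1) < σ q then -1 else 1) * (lam (σ q) - lam (σ (q + 1)))⁻¹) := by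
  unfold Jfun
  rcases hq.lt_or_gt with hlt | hgt
  · simp only [hlt, if_true, hlt.not_gt, if_false, one_mul, neg_sub, sub_neg_eq_add]
    refine (hasSum_zpow_neg_sub_one_mul_zpow (hlam hlt)).congr_fun fun j => ?_
    ring_nf
  · simp only [hgt, if_true, hgt.not_gt, if_false, neg_one_mul, ← inv_neg, neg_sub]
    refine (hasSum_zpow_neg_sub_one_mul_zpow (hlam hgt)).congr_fun fun j => ?_
    ring_nf

/-- **Lemma 2.1** (paper `n = m+2 ≥ 2`): for `|λ_1| > ⋯ > |λ_n| > 0`, the family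
`∏_q λ_{σ(q)}^{J_{σ,q}(j_q) − J_{σ,q−1}(j_{q−1}) − 1}` over `j ∈ (ℤ_{≥0})^n` is summable with
sum `(−1)^{m(σ)} / ∏_q (λ_{σ(q)} − λ_{σ(q+1)})`; i.e. this is the Laurent expansion of
`P(σ;λ_1,…,λ_n)` around `∞` in that region, up to the sign `(−1)^{m(σ)}`. -/
theorem GUE_laurent_expansion_P (m : ℕ) (σ : Equiv.Perm (Fin (m + 2)))
    (lam : Fin (m + 2) → ℂ) (hne : ∀ q, lam q ≠ 0)
    (hlt : ∀ a b : Fin (m + 2), a < b → ‖lam b‖ < ‖lam a‖) :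
    HasSum
      (fun j : Fin (m + 2) → ℕ =>
        ∏ q, lam (σ q) ^ (Jfun σ q (j q) - Jfun σ (q - 1) (j (q - 1)) - 1))
      ((-1 : ℂ) ^ mcount σ / ∏ q, (lam (σ q) - lam (σ (q + 1)))) := by
  have hσ : ∀ q : Fin (m + 2), σ q ≠ σ (q + 1) := fun q h => by
    simpa [Fin.ext_iff] using σ.injective h
  have hEdges := HasSum.pi_prod fun q => hasSum_zpow_Jfun_mul_zpow_Jfun σ hlt (hσ q)
  rw [prod_sign_mul_inv_eq_neg_one_pow_mcount_div] at hEdges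
  exact hEdges.congr_fun fun j =>
    (Fin.prod_zpow_mul_zpow_add_one (fun q => lam (σ q)) (fun q => hne (σ q)) _).symm
end

section
/- Let n ≥ 2, let i = (i_1,…,i_n) be integers with all i_p ≥ 1 and total T := i_1+⋯+i_n, and let σ be a permutation of {1,…,n} with σ(n) = n. Then the number of tuples j ∈ (ℤ_{≥0})^n satisfying K_{i,σ,q}(j) = 0 for all 1 ≤ q ≤ n−1 and K_{i,σ,n}(j) = T equals i_1 if σ belongs to S_n^{{2}}, and equals 0 if σ does not belong to S_n^{{2}}. -/
/-!
Write `x_q := J_{σ,q}(j_q)` and let `s_k` be the prefix sums of `i ∘ σ` (positions are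
`0, …, n - 1` here, so `i 0` is the paper's `i_1`). The equations `K_q = 0` say
`x_q = x_{q-1} - i_{σ(q)}`, and since the last position is a descent, `x_last = j_last =: t`.
Hence `x_q = t - s_{q+1}`, the equation `K_last = T` holds automatically, and a solution is
determined by `t`; it exists iff `s_{q+1} ≤ t` holds exactly at the descents `q` of `σ`, because
`x_q ≥ 0` exactly there. As `s` is strictly increasing, the descents must then form an initial
segment `{q < d}`: `σ` is unimodal with `σ(d) = 1`, and the admissible `t` fill the interval
`[s_d, s_{d+1})` of length `i_{σ(d)} = i_1`.
-/

section Jfun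

variable {n : ℕ} (σ : Equiv.Perm (Fin (n + 2)))

lemma apply_ne_apply_add_one (q : Fin (n + 2)) : σ q ≠ σ (q + 1) :=
  σ.injective.ne (left_ne_add.mpr Fin.zero_ne_one.symm)

lemma Jfun_nonneg_iff (q : Fin (n + 2)) (j : ℕ) : 0 ≤ Jfun σ q j ↔ σ (q + 1) < σ q := by
  unfold Jfun
  split_ifs with h
  · exact iff_of_false (by omega) h.not_gt
  · exact iff_of_true (by omega) ((not_lt.mp h).lt_of_ne (apply_ne_apply_add_one σ q).symm)

lemma Jfun_injective (q : Fin (n + 2)) : Function.Injective (Jfun σ q) := by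
  intro j j' h
  unfold Jfun at h
  split_ifs at h <;> omega

lemma exists_Jfun_eq {q : Fin (n + 2)} {x : ℤ} (hx : 0 ≤ x ↔ σ (q + 1) < σ q) :
    ∃ j, Jfun σ q j = x := by
  unfold Jfun
  by_cases h : σ q < σ (q + 1)
  · refine ⟨(-x - 1).toNat, ?_⟩
    have : x < 0 := not_le.mp fun h' => h.not_gt (hx.mp h')
    rw [if_pos h]; omega
  · refine ⟨x.toNat, ?_⟩
    have : 0 ≤ x := hx.mpr ((not_lt.mp h).lt_of_ne (apply_ne_apply_add_one σ q).symm)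
    rw [if_neg h]; omega

lemma Jfun_last (hσ : σ (Fin.last (n + 1)) = Fin.last (n + 1)) (j : ℕ) :
    Jfun σ (Fin.last (n + 1)) j = j := by
  rw [Jfun, Fin.last_add_one, hσ, if_neg (Fin.le_last _).not_gt]

end Jfun

section PrefixSum

open Fin.NatCast

variable {n : ℕ} [NeZero n] (a : Fin n → ℤ)

def prefixSum (k : ℕ) : ℤ := ∑ p ∈ Finset.range k, a p

@[simp]
lemma prefixSum_zero : prefixSum a 0 = 0 := Finset.sum_range_zero _

lemma prefixSum_succ (k : ℕ) : prefixSum a (k + 1) = prefixSum a k + a k :=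
  Finset.sum_range_succ _ _

lemma prefixSum_val_succ (q : Fin n) : prefixSum a (q.val + 1) = prefixSum a q.val + a q := by
  rw [prefixSum_succ, Fin.cast_val_eq_self]

lemma prefixSum_self : prefixSum a n = ∑ q, a q := by
  simp only [prefixSum, ← Fin.sum_univ_eq_sum_range, Fin.cast_val_eq_self]

lemma prefixSum_strictMono (ha : ∀ p, 0 < a p) : StrictMono (prefixSum a) :=
  strictMono_nat_of_lt_succ fun k => by rw [prefixSum_succ]; linarith [ha k]

end PrefixSum

lemma prefixSum_val_succ_eq {n : ℕ} (a : Fin (n + 1) → ℤ) (q : Fin (n + 1)) :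
    prefixSum a (q.val + 1) =
      prefixSum a (q + 1).val + if q = Fin.last n then ∑ p, a p else 0 := by
  rw [Fin.val_add_one]
  split_ifs with h
  · simp [h, prefixSum_self]
  · simp

lemma Fin.eq_zero_of_forall_eq_sub_one {n : ℕ} {β : Type*} {g : Fin (n + 1) → β}
    (h : ∀ q, g q = g (q - 1)) (q : Fin (n + 1)) : g q = g 0 := by
  induction q using Fin.induction with
  | zero => rfl
  | succ q ih => rw [h, ← Fin.coeSucc_eq_succ, add_sub_cancel_right, ih]

section Solutions

variable {n : ℕ} (i : Fin (n + 2) → ℤ) (σ : Equiv.Perm (Fin (n + 2)))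

def solutionSet : Set (Fin (n + 2) → ℕ) :=
  {j | (∀ q, q ≠ Fin.last (n + 1) → Kfun i σ j q = 0) ∧ Kfun i σ j (Fin.last (n + 1)) = ∑ p, i p}

-- `(q + 1).val` wraps around to `0` at `q = last`.
def Jlevel (j : Fin (n + 2) → ℕ) (q : Fin (n + 2)) : ℤ :=
  Jfun σ q (j q) + prefixSum (i ∘ σ) (q + 1).val

def admissible : Set ℕ :=
  {t | ∀ q, prefixSum (i ∘ σ) (q + 1).val ≤ t ↔ σ (q + 1) < σ q}

lemma Kfun_eq_Jlevel_sub (j : Fin (n + 2) → ℕ) (q : Fin (n + 2)) :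
    Kfun i σ j q =
      Jlevel i σ j q - Jlevel i σ j (q - 1) + if q = Fin.last (n + 1) then ∑ p, i p else 0 := by
  have hjump := prefixSum_val_succ_eq (i ∘ σ) q
  have htotal : ∑ p, (i ∘ σ) p = ∑ p, i p := Equiv.sum_comp σ i
  rw [prefixSum_val_succ, Function.comp_apply, htotal] at hjump
  rw [Kfun, Jlevel, Jlevel, sub_add_cancel]
  linarith

variable {i σ}

lemma Jlevel_last (hσ : σ (Fin.last (n + 1)) = Fin.last (n + 1)) (j : Fin (n + 2) → ℕ) :
    Jlevel i σ j (Fin.last (n + 1)) = j (Fin.last (n + 1)) := by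
  simp [Jlevel, Jfun_last σ hσ]

lemma mem_solutionSet_iff (hσ : σ (Fin.last (n + 1)) = Fin.last (n + 1)) {j : Fin (n + 2) → ℕ} :
    j ∈ solutionSet i σ ↔ ∀ q, Jlevel i σ j q = j (Fin.last (n + 1)) := by
  have hcyc : j ∈ solutionSet i σ ↔ ∀ q, Jlevel i σ j q = Jlevel i σ j (q - 1) := by
    simp only [solutionSet, Set.mem_ofPred_eq, Kfun_eq_Jlevel_sub]
    refine ⟨fun ⟨h, hlast⟩ q => ?_, fun h => ⟨fun q hq => ?_, ?_⟩⟩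
    · by_cases hq : q = Fin.last (n + 1)
      · subst hq; simp only [if_true] at hlast; linarith
      · have := h q hq; rw [if_neg hq] at this; linarith
    · rw [if_neg hq, h q]; ring
    · rw [if_true, h (Fin.last _)]; ring
  rw [hcyc, ← Jlevel_last hσ j]
  refine ⟨fun h q => ?_, fun h q => by rw [h q, h (q - 1)]⟩
  rw [Fin.eq_zero_of_forall_eq_sub_one h q, Fin.eq_zero_of_forall_eq_sub_one h (Fin.last _)]

lemma injOn_solutionSet (hσ : σ (Fin.last (n + 1)) = Fin.last (n + 1)) :
    Set.InjOn (fun j => j (Fin.last (n + 1))) (solutionSet i σ) := by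
  intro j hj j' hj' hlast
  funext q
  have h := (mem_solutionSet_iff hσ).mp hj q
  have h' := (mem_solutionSet_iff hσ).mp hj' q
  simp only at hlast
  exact Jfun_injective σ q (by simp only [Jlevel] at h h'; omega)

lemma image_solutionSet (hσ : σ (Fin.last (n + 1)) = Fin.last (n + 1)) :
    (fun j => j (Fin.last (n + 1))) '' solutionSet i σ = admissible i σ := by
  ext t
  constructor
  · rintro ⟨j, hj, rfl⟩ q
    dsimp only
    have h := (mem_solutionSet_iff hσ).mp hj q
    rw [← Jfun_nonneg_iff σ q (j q)]
    simp only [Jlevel] at h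
    omega
  · intro ht
    choose j hj using fun q =>
      exists_Jfun_eq σ (x := t - prefixSum (i ∘ σ) (q + 1).val) (sub_nonneg.trans (ht q))
    have hlast : j (Fin.last (n + 1)) = t := by
      have := hj (Fin.last (n + 1))
      rw [Jfun_last σ hσ, Fin.last_add_one] at this
      simpa using this
    refine ⟨j, (mem_solutionSet_iff hσ).mpr fun q => ?_, hlast⟩
    rw [Jlevel, hj, hlast]
    ring

end Solutions

lemma StrictMono.exists_le_iff_le {S : ℕ → ℤ} (hS : StrictMono S) {t : ℤ} (h0 : S 0 ≤ t) :
    ∃ d, ∀ k, S k ≤ t ↔ k ≤ d := by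
  have hgrowth : ∀ k : ℕ, S 0 + k ≤ S k := by
    intro k
    induction k with
    | zero => simp
    | succ k ih => have := hS (lt_add_one k); push_cast; omega
  have hex : ∃ k, t < S k := ⟨(t - S 0).toNat + 1, by have := hgrowth ((t - S 0).toNat + 1); omega⟩
  have hpos : Nat.find hex ≠ 0 := fun h => (Nat.find_spec hex).not_ge (h ▸ h0)
  refine ⟨Nat.find hex - 1, fun k => ⟨fun hk => ?_, fun hk => ?_⟩⟩
  · by_contra hlt
    exact (hS.monotone (show Nat.find hex ≤ k by omega)).not_gt (hk.trans_lt (Nat.find_spec hex))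
  · exact not_lt.mp (Nat.find_min hex (by omega))

lemma StrictMono.forall_le_iff_lt_iff {β : Type*} [LinearOrder β] {S : ℕ → β} (hS : StrictMono S)
    {t : β} (h0 : S 0 ≤ t) {d N : ℕ} (hd : d ≤ N) :
    (∀ k ≤ N, (S (k + 1) ≤ t ↔ k < d)) ↔ S d ≤ t ∧ t < S (d + 1) := by
  constructor
  · intro h
    refine ⟨?_, not_le.mp fun hle => lt_irrefl d ((h d hd).mp hle)⟩
    rcases Nat.eq_zero_or_eq_succ_pred d with hd0 | hd1
    · rwa [hd0]
    · rw [hd1]; exact (h _ (by omega)).mpr (by omega)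
  · rintro ⟨hlow, hhigh⟩ k -
    constructor
    · intro hk
      by_contra hkd
      exact (hS.monotone (show d + 1 ≤ k + 1 by omega)).not_gt (hk.trans_lt hhigh)
    · intro hk
      exact (hS.monotone (show k + 1 ≤ d by omega)).trans hlow

section Valley

variable {n : ℕ}

lemma Fin.val_le_of_ne_last {q : Fin (n + 2)} (hq : q ≠ Fin.last (n + 1)) : q.val ≤ n := by
  have : q.val ≠ n + 1 := fun h => hq (Fin.ext h)
  omega

def DescentsBelow (σ : Equiv.Perm (Fin (n + 2))) (D : Fin (n + 2)) : Prop :=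
  ∀ q, q ≠ Fin.last (n + 1) → (σ (q + 1) < σ q ↔ q < D)

variable {σ : Equiv.Perm (Fin (n + 2))}

lemma descentsBelow_of_SPerm {r : ℕ} (hS : SPerm n r σ) :
    DescentsBelow σ ⟨n + 1 - r, by omega⟩ := by
  obtain ⟨-, -, hanti, hmono⟩ := hS
  intro q hq
  have hsucc : (q + 1).val = q.val + 1 :=
    Fin.val_add_one_of_lt (lt_of_le_of_ne (Fin.le_last q) hq)
  have hlt : q < q + 1 := Fin.lt_def.mpr (by omega)
  constructor
  · intro hdesc
    by_contra hge
    exact hdesc.not_gt (hmono q (q + 1) (Fin.le_def.mp (not_lt.mp hge)) hlt)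
  · intro hq'
    exact hanti q (q + 1) hlt (by rw [hsucc]; exact hq')

lemma Fin.ne_last_of_not_isMax {q : Fin (n + 2)} (hq : ¬IsMax q) : q ≠ Fin.last (n + 1) :=
  fun h => hq fun b _ => h ▸ Fin.le_last b

lemma Fin.orderSucc_eq_add_one {q : Fin (n + 2)} (hq : q ≠ Fin.last (n + 1)) :
    Order.succ q = q + 1 := by
  obtain ⟨k, rfl⟩ := Fin.exists_castSucc_eq.mpr hq
  rw [Fin.orderSucc_castSucc, Fin.coeSucc_eq_succ]

lemma SPerm_of_descentsBelow (hσ : σ (Fin.last (n + 1)) = Fin.last (n + 1)) {D : Fin (n + 2)}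
    (h : DescentsBelow σ D) : SPerm n (n + 1 - D.val) σ := by
  have hanti : StrictAntiOn σ (Set.Iic D) := strictAntiOn_Iic_of_succ_lt fun q hq => by
    rw [Fin.orderSucc_eq_add_one (Fin.ne_last_of_lt hq)]
    exact (h q (Fin.ne_last_of_lt hq)).mpr hq
  have hmono : StrictMonoOn σ (Set.Ici D) :=
    strictMonoOn_of_lt_succ Set.ordConnected_Ici fun q hmax hq _ => by
      have hq' := Fin.ne_last_of_not_isMax hmax
      rw [Fin.orderSucc_eq_add_one hq']
      refine lt_of_le_of_ne (not_lt.mp fun hdesc => ?_) (apply_ne_apply_add_one σ q)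
      exact (not_lt.mpr hq) ((h q hq').mp hdesc)
  have hmin : ∀ e, σ D ≤ σ e := fun e => (le_total e D).elim
    (fun he => hanti.antitoneOn he Set.self_mem_Iic he)
    (fun he => hmono.monotoneOn Set.self_mem_Ici he he)
  have hD : (⟨n + 1 - (n + 1 - D.val), by omega⟩ : Fin (n + 2)) = D := Fin.ext (by simp; omega)
  refine ⟨hσ, ?_, fun a b hab hb => hanti ?_ ?_ hab, fun a b ha hab => hmono ?_ ?_ hab⟩
  · rw [hD]
    exact le_antisymm (by simpa using hmin (σ.symm 0)) (Fin.zero_le _)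
  all_goals simp only [Set.mem_Iic, Set.mem_Ici, Fin.le_def]; omega

end Valley

section Admissible

variable {n : ℕ} {i : Fin (n + 2) → ℤ} {σ : Equiv.Perm (Fin (n + 2))}

lemma mem_admissible_iff (hσ : σ (Fin.last (n + 1)) = Fin.last (n + 1)) {t : ℕ} :
    t ∈ admissible i σ ↔
      ∀ q, q ≠ Fin.last (n + 1) → (prefixSum (i ∘ σ) (q.val + 1) ≤ t ↔ σ (q + 1) < σ q) := by
  refine ⟨fun ht q hq => ?_, fun ht q => ?_⟩
  · rw [← Fin.val_add_one_of_lt (lt_of_le_of_ne (Fin.le_last q) hq)]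
    exact ht q
  · by_cases hq : q = Fin.last (n + 1)
    · subst hq
      rw [Fin.last_add_one, hσ, Fin.val_zero, prefixSum_zero]
      refine iff_of_true (Nat.cast_nonneg t) (lt_of_le_of_ne (Fin.le_last _) ?_)
      rw [← hσ]
      exact σ.injective.ne (Fin.last_pos.ne)
    · rw [Fin.val_add_one_of_lt (lt_of_le_of_ne (Fin.le_last q) hq)]
      exact ht q hq

lemma admissible_eq_Ico (hi : ∀ p, 0 < i p) (hσ : σ (Fin.last (n + 1)) = Fin.last (n + 1))
    {D : Fin (n + 2)} (hD : D ≠ Fin.last (n + 1)) (h : DescentsBelow σ D) :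
    admissible i σ =
      Set.Ico (prefixSum (i ∘ σ) D.val).toNat (prefixSum (i ∘ σ) (D.val + 1)).toNat := by
  have hS := prefixSum_strictMono (i ∘ σ) fun p => hi (σ p)
  ext t
  have hpattern : (∀ q, q ≠ Fin.last (n + 1) →
      (prefixSum (i ∘ σ) (q.val + 1) ≤ t ↔ σ (q + 1) < σ q)) ↔
      ∀ k ≤ n, (prefixSum (i ∘ σ) (k + 1) ≤ t ↔ k < D.val) := by
    refine ⟨fun ht k hk => ?_, fun ht q hq => ?_⟩
    · have hk' : (⟨k, by omega⟩ : Fin (n + 2)) ≠ Fin.last (n + 1) :=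
        Fin.ne_of_val_ne (by simp; omega)
      exact (ht _ hk').trans (h _ hk')
    · exact (ht q.val (Fin.val_le_of_ne_last hq)).trans (h q hq).symm
  have hnonneg : 0 ≤ prefixSum (i ∘ σ) D.val := by simpa using hS.monotone (Nat.zero_le D.val)
  rw [mem_admissible_iff hσ, hpattern,
    hS.forall_le_iff_lt_iff (by simp) (Fin.val_le_of_ne_last hD), Set.mem_Ico]
  omega

lemma exists_descentsBelow_of_mem_admissible (hi : ∀ p, 0 < i p)
    (hσ : σ (Fin.last (n + 1)) = Fin.last (n + 1)) {t : ℕ} (ht : t ∈ admissible i σ) :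
    ∃ D, D ≠ Fin.last (n + 1) ∧ DescentsBelow σ D := by
  obtain ⟨d, hd⟩ := (prefixSum_strictMono (i ∘ σ) fun p => hi (σ p)).exists_le_iff_le
    (t := t) (by simp)
  rw [mem_admissible_iff hσ] at ht
  have hdesc : ∀ q, q ≠ Fin.last (n + 1) → (σ (q + 1) < σ q ↔ q.val < d) :=
    fun q hq => (ht q hq).symm.trans ((hd _).trans Nat.add_one_le_iff)
  have hdn : d ≤ n := by
    by_contra hlt
    have hq : (Fin.last n).castSucc ≠ Fin.last (n + 1) := (Fin.castSucc_lt_last _).ne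
    have hdrop := (hdesc _ hq).mpr (by simp; omega)
    rw [Fin.coeSucc_eq_succ, Fin.succ_last, hσ] at hdrop
    exact hdrop.not_ge (Fin.le_last _)
  exact ⟨⟨d, by omega⟩, Fin.ne_of_val_ne (by simp; omega), fun q hq => hdesc q hq⟩

lemma admissible_eq_empty (hi : ∀ p, 0 < i p) (hσ : σ (Fin.last (n + 1)) = Fin.last (n + 1))
    (hσ2 : ¬inS2 n σ) : admissible i σ = ∅ := by
  refine Set.eq_empty_of_forall_notMem fun t ht => hσ2 ?_
  obtain ⟨D, hD, h⟩ := exists_descentsBelow_of_mem_admissible hi hσ ht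
  have hDn := Fin.val_le_of_ne_last hD
  exact ⟨n + 1 - D.val, by omega, by omega, SPerm_of_descentsBelow hσ h⟩

lemma ncard_admissible_of_SPerm (hi : ∀ p, 0 < i p)
    (hσ : σ (Fin.last (n + 1)) = Fin.last (n + 1)) {r : ℕ} (hr : 1 ≤ r) (hS : SPerm n r σ) :
    (admissible i σ).Finite ∧ ((admissible i σ).ncard : ℤ) = i 0 := by
  have hD : (⟨n + 1 - r, by omega⟩ : Fin (n + 2)) ≠ Fin.last (n + 1) :=
    Fin.ne_of_val_ne (by simp; omega)
  have hstep := prefixSum_val_succ (i ∘ σ) ⟨n + 1 - r, by omega⟩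
  have hnonneg :=
    (prefixSum_strictMono (i ∘ σ) fun p => hi (σ p)).monotone (Nat.zero_le (n + 1 - r))
  rw [Function.comp_apply, hS.2.1] at hstep
  rw [prefixSum_zero] at hnonneg
  rw [admissible_eq_Ico hi hσ hD (descentsBelow_of_SPerm hS), Set.ncard_Ico_nat]
  refine ⟨Set.finite_Ico _ _, ?_⟩
  rw [show (⟨0, _⟩ : Fin (n + 2)) = 0 from rfl] at hstep
  simp only at hstep ⊢
  have := hi 0
  omega

end Admissible

/-- Counting fact used in the proof of Theorem 1.1 (paper `n = m+2 ≥ 2`): for `σ(n) = n`,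
the number of `j ∈ (ℤ_{≥0})^n` with `K_{i,σ,q}(j) = 0` for `1 ≤ q ≤ n−1` and
`K_{i,σ,n}(j) = i_1+⋯+i_n` is `i_1` if `σ ∈ S_n^{{2}}` and `0` otherwise. -/
theorem count_solutions_case1 (m : ℕ) (i : Fin (m + 2) → ℤ) (hi : ∀ p, 1 ≤ i p)
    (σ : Equiv.Perm (Fin (m + 2))) (hσ : σ (Fin.last (m + 1)) = Fin.last (m + 1)) :
    {j : Fin (m + 2) → ℕ | (∀ q, q ≠ Fin.last (m + 1) → Kfun i σ j q = 0) ∧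
        Kfun i σ j (Fin.last (m + 1)) = ∑ p, i p}.Finite ∧
      (inS2 m σ →
        (({j : Fin (m + 2) → ℕ | (∀ q, q ≠ Fin.last (m + 1) → Kfun i σ j q = 0) ∧
            Kfun i σ j (Fin.last (m + 1)) = ∑ p, i p}.ncard : ℤ) = i 0)) ∧
      (¬ inS2 m σ →
        ({j : Fin (m + 2) → ℕ | (∀ q, q ≠ Fin.last (m + 1) → Kfun i σ j q = 0) ∧
            Kfun i σ j (Fin.last (m + 1)) = ∑ p, i p}.ncard = 0)) := by
  change (solutionSet i σ).Finite ∧ (inS2 m σ → ((solutionSet i σ).ncard : ℤ) = i 0) ∧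
    (¬inS2 m σ → (solutionSet i σ).ncard = 0)
  have hpos : ∀ p, 0 < i p := hi
  have hcard : (solutionSet i σ).ncard = (admissible i σ).ncard := by
    rw [← image_solutionSet hσ, (injOn_solutionSet hσ).ncard_image]
  have hfinite (h : (admissible i σ).Finite) : (solutionSet i σ).Finite :=
    Set.Finite.of_finite_image (by rwa [image_solutionSet hσ]) (injOn_solutionSet hσ)
  by_cases hS2 : inS2 m σ
  · obtain ⟨r, hr, hr', hS⟩ := hS2
    obtain ⟨hadm_fin, hadm_card⟩ := ncard_admissible_of_SPerm hpos hσ hr hS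
    exact ⟨hfinite hadm_fin, fun _ => hcard ▸ hadm_card, fun h => (h ⟨r, hr, hr', hS⟩).elim⟩
  · have hempty := admissible_eq_empty hpos hσ hS2
    refine ⟨hfinite (hempty ▸ Set.finite_empty), fun h => absurd h hS2, fun _ => ?_⟩
    rw [hcard, hempty, Set.ncard_empty]
end

section
/- Fix an integer n ≥ 2 and nonnegative integers k_1,…,k_{n−1} with |k| := k_1+⋯+k_{n−1}. For integers g large enough that 2g+2n−2−|k| ≥ 0, define Λ(g) := l_{k_1,…,k_{n−1}, 2g+2n−2−|k|} / (2g+2n−3)!!. Then as g → ∞, Λ(g) converges, with limit 1 if (k_1,…,k_{n−1}) = (0,0,…,0); limit −1 if (k_1,…,k_{n−1}) = (1,0,…,0); and limit 0 for every other choice of (k_1,…,k_{n−1}). -/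
/-!
With `P = L_{k_1} ⋯ L_{k_{n-1}}`, `S = |k|` and last index `K = 2g + 2n - 2 - S`, we have
`K ≡ S (mod 2)` and the denominator is `(K + S - 1)!!`. For even `K`,
`tr (P L_K) = (K-1)!! (P₀₀ - P₁₁)`; for odd `K`, `tr (P L_K) = (K-2)!! P₀₁ - K!! P₁₀`. Since
`(K + 2)·K!! ≤ (K + 2t)!!` for `t ≥ 1`, a ratio `K!! / (K + 2t)!!` tends to `0` unless `t = 0`,
so the limit is `P₀₀ - P₁₁` if `S = 0`, `-P₁₀` if `S = 1`, and `0` otherwise. As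
`L_0 = diag(1, 0)` is idempotent with vanishing second row, these entries are `1`, resp. `-1` or
`0` according to whether the single index equal to `1` is `k_1`.
-/

open Filter Topology

lemma df_add_two (k : ℕ) : df (k + 2) = (k + 2) * df k := rfl

lemma df_pos (k : ℕ) : 0 < df k := by
  induction k using df.induct with
  | case1 | case2 => decide
  | case3 k ih => rw [df_add_two]; positivity

lemma df_le_df_add_two_mul (k t : ℕ) : df k ≤ df (k + 2 * t) := by
  induction t with
  | zero => rfl
  | succ t ih =>
    rw [mul_add_one, ← add_assoc, df_add_two]
    exact ih.trans (Nat.le_mul_of_pos_left _ (by omega))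

lemma add_two_mul_df_le (k : ℕ) {t : ℕ} (ht : t ≠ 0) : (k + 2) * df k ≤ df (k + 2 * t) := by
  obtain ⟨t, rfl⟩ := Nat.exists_eq_succ_of_ne_zero ht
  rw [← df_add_two, show k + 2 * (t + 1) = k + 2 + 2 * t by ring]
  exact df_le_df_add_two_mul _ _

lemma tendsto_df_div_df_add_two_mul (t : ℕ) :
    Tendsto (fun k : ℕ => (df k : ℝ) / df (k + 2 * t)) atTop (𝓝 (if t = 0 then 1 else 0)) := by
  split_ifs with ht
  · subst ht
    refine tendsto_const_nhds.congr fun k => ?_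
    rw [mul_zero, add_zero, div_self (by exact_mod_cast (df_pos k).ne')]
  · refine squeeze_zero (fun k => by positivity) (fun k => ?_)
      tendsto_one_div_add_atTop_nhds_zero_nat
    rw [div_le_div_iff₀ (by exact_mod_cast df_pos _) (by positivity), one_mul]
    have := add_two_mul_df_le k ht
    calc (df k : ℝ) * (k + 1) ≤ ((k + 2) * df k : ℕ) := by push_cast; nlinarith [df_pos k]
      _ ≤ df (k + 2 * t) := by exact_mod_cast this

lemma tendsto_two_mul_add_atTop (c : ℕ) : Tendsto (fun j : ℕ => 2 * j + c) atTop atTop :=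
  tendsto_atTop_mono (fun j => show j ≤ 2 * j + c by omega) tendsto_id

lemma tendsto_toNat_add_atTop (c : ℤ) : Tendsto (fun g : ℤ => (g + c).toNat) atTop atTop :=
  tendsto_atTop_atTop.2 fun b => ⟨b - c, fun g hg => by omega⟩

lemma dfacZ_of_pos {z : ℤ} (hz : 0 < z) : dfacZ z = df z.toNat := if_neg hz.not_ge

lemma trace_mul_Lmat_even (P : Matrix (Fin 2) (Fin 2) ℝ) (j : ℕ) :
    (P * Lmat (2 * j + 2)).trace = df (2 * j + 1) * (P 0 0 - P 1 1) := by
  rw [Lmat, if_neg (by omega), if_pos (by omega)]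
  simp [Matrix.trace_fin_two, Matrix.mul_apply]
  ring

lemma trace_mul_Lmat_odd (P : Matrix (Fin 2) (Fin 2) ℝ) (j : ℕ) :
    (P * Lmat (2 * j + 3)).trace = df (2 * j + 1) * P 0 1 - df (2 * j + 3) * P 1 0 := by
  rw [Lmat, if_neg (by omega), if_neg (by omega)]
  simp [Matrix.trace_fin_two, Matrix.mul_apply]
  ring

lemma tendsto_trace_mul_Lmat_even_div (P : Matrix (Fin 2) (Fin 2) ℝ) (s : ℕ) :
    Tendsto (fun j : ℕ => (P * Lmat (2 * j + 2)).trace / df (2 * j + 1 + 2 * s)) atTop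
      (𝓝 (if s = 0 then P 0 0 - P 1 1 else 0)) := by
  have h := ((tendsto_df_div_df_add_two_mul s).comp (tendsto_two_mul_add_atTop 1)).const_mul
    (P 0 0 - P 1 1)
  rw [mul_ite, mul_one, mul_zero] at h
  refine h.congr fun j => ?_
  rw [trace_mul_Lmat_even]
  simp only [Function.comp_apply]
  ring

lemma tendsto_trace_mul_Lmat_odd_div (P : Matrix (Fin 2) (Fin 2) ℝ) (s : ℕ) :
    Tendsto (fun j : ℕ => (P * Lmat (2 * j + 3)).trace / df (2 * j + 3 + 2 * s)) atTop
      (𝓝 (if s = 0 then -P 1 0 else 0)) := by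
  have h₁ := ((tendsto_df_div_df_add_two_mul (s + 1)).comp (tendsto_two_mul_add_atTop 1)).const_mul
    (P 0 1)
  have h₃ := ((tendsto_df_div_df_add_two_mul s).comp (tendsto_two_mul_add_atTop 3)).const_mul
    (P 1 0)
  have h := h₁.sub h₃
  rw [if_neg s.succ_ne_zero, mul_ite, mul_one, mul_zero, mul_zero, zero_sub, apply_ite Neg.neg,
    neg_zero] at h
  refine h.congr fun j => ?_
  simp only [Function.comp_apply]
  rw [trace_mul_Lmat_odd, show 2 * j + 1 + 2 * (s + 1) = 2 * j + 3 + 2 * s by ring]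
  ring

noncomputable def Lprod {n : ℕ} (k : Fin n → ℕ) : Matrix (Fin 2) (Fin 2) ℝ :=
  (List.ofFn fun p => Lmat (k p)).prod

lemma Lprod_succ {n : ℕ} (k : Fin (n + 1) → ℕ) : Lprod k = Lmat (k 0) * Lprod (Fin.tail k) := by
  rw [Lprod, List.ofFn_succ, List.prod_cons]
  rfl

lemma Lprod_of_forall_eq_zero {n : ℕ} {k : Fin n → ℕ} (hk : ∀ p, k p = 0) :
    Lprod k = Lmat 0 ^ n := by
  simp [Lprod, hk, List.prod_replicate]

lemma lSeq_snoc {n : ℕ} (k : Fin n → ℕ) {K : ℤ} (hK : 0 ≤ K) :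
    lSeq (n + 1) (Fin.snoc (fun p => (k p : ℤ)) K) = (Lprod k * Lmat K.toNat).trace := by
  rw [lSeq, if_pos (Fin.lastCases (by simpa) fun p => by simp), List.ofFn_succ', List.prod_concat]
  simp [Lprod]

lemma Lmat_zero_mul_apply_zero (Q : Matrix (Fin 2) (Fin 2) ℝ) (j : Fin 2) :
    (Lmat 0 * Q) 0 j = Q 0 j := by
  simp [Lmat, Matrix.mul_apply]

lemma Lmat_zero_mul_apply_one (Q : Matrix (Fin 2) (Fin 2) ℝ) (j : Fin 2) :
    (Lmat 0 * Q) 1 j = 0 := by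
  simp [Lmat, Matrix.mul_apply]

lemma Lmat_one_mul_apply_one (Q : Matrix (Fin 2) (Fin 2) ℝ) (j : Fin 2) :
    (Lmat 1 * Q) 1 j = Q 0 j := by
  simp [Lmat, Matrix.mul_apply, df]

lemma Lmat_zero_pow_apply_zero_zero (n : ℕ) : (Lmat 0 ^ n) 0 0 = 1 := by
  induction n with
  | zero => rfl
  | succ n ih => rw [pow_succ', Lmat_zero_mul_apply_zero, ih]

lemma Lprod_apply_sub_of_forall_eq_zero {n : ℕ} {k : Fin (n + 1) → ℕ} (hk : ∀ p, k p = 0) :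
    Lprod k 0 0 - Lprod k 1 1 = 1 := by
  rw [Lprod_of_forall_eq_zero hk, pow_succ', Lmat_zero_mul_apply_zero, Lmat_zero_mul_apply_one,
    Lmat_zero_pow_apply_zero_zero, sub_zero]

lemma Lprod_apply_one_zero_of_sum_eq_one {n : ℕ} {k : Fin (n + 1) → ℕ} (hk : ∑ p, k p = 1) :
    Lprod k 1 0 = if k 0 = 1 ∧ ∀ p, p ≠ 0 → k p = 0 then 1 else 0 := by
  rw [Fin.sum_univ_succ] at hk
  rw [Lprod_succ]
  by_cases h0 : k 0 = 1
  · have htail : ∀ i, Fin.tail k i = 0 := by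
      simpa [Fin.tail, h0] using hk
    have hrest : ∀ p, p ≠ 0 → k p = 0 := fun p hp => by
      obtain ⟨i, rfl⟩ := Fin.exists_succ_eq.mpr hp
      exact htail i
    rw [if_pos ⟨h0, hrest⟩, h0, Lmat_one_mul_apply_one, Lprod_of_forall_eq_zero htail,
      Lmat_zero_pow_apply_zero_zero]
  · rw [if_neg fun h => h0 h.1, show k 0 = 0 by omega, Lmat_zero_mul_apply_one]

noncomputable def limitValue {n : ℕ} (k : Fin (n + 1) → ℕ) : ℝ :=
  if ∀ p, k p = 0 then 1 else if k 0 = 1 ∧ ∀ p, p ≠ 0 → k p = 0 then -1 else 0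

lemma limitValue_of_two_le_sum {n : ℕ} {k : Fin (n + 1) → ℕ} (hk : 2 ≤ ∑ p, k p) :
    limitValue k = 0 := by
  have hne : ¬ ∀ p, k p = 0 := fun h => by simp [h] at hk
  have hne' : ¬ (k 0 = 1 ∧ ∀ p, p ≠ 0 → k p = 0) := fun ⟨h0, h⟩ => by
    rw [Fintype.sum_eq_single 0 h, h0] at hk
    omega
  rw [limitValue, if_neg hne, if_neg hne']

/-- The paper's `Λ(g)`. -/
noncomputable def normalizedL (m : ℕ) (k : Fin (m + 1) → ℕ) (g : ℤ) : ℝ :=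
  lSeq (m + 2) (Fin.snoc (fun p => (k p : ℤ)) (2 * g + 2 * (m + 2 : ℕ) - 2 - ∑ p, (k p : ℤ))) /
    (dfacZ (2 * g + 2 * (m + 2 : ℕ) - 3) : ℝ)

section

variable {m : ℕ} {k : Fin (m + 1) → ℕ} {s : ℕ}

lemma normalizedL_of_sum_eq_two_mul (hk : ∑ p, k p = 2 * s) {g : ℤ} (hg : s ≤ g + m) :
    normalizedL m k g = (Lprod k * Lmat (2 * (g + m - s).toNat + 2)).trace /
      df (2 * (g + m - s).toNat + 1 + 2 * s) := by
  have hk' : ∑ p, (k p : ℤ) = 2 * s := by exact_mod_cast hk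
  rw [normalizedL, hk', lSeq_snoc _ (by omega), dfacZ_of_pos (by omega)]
  congr 5 <;> omega

lemma normalizedL_of_sum_eq_two_mul_add_one (hk : ∑ p, k p = 2 * s + 1) {g : ℤ}
    (hg : s + 1 ≤ g + m) :
    normalizedL m k g = (Lprod k * Lmat (2 * (g + m - s - 1).toNat + 3)).trace /
      df (2 * (g + m - s - 1).toNat + 3 + 2 * s) := by
  have hk' : ∑ p, (k p : ℤ) = 2 * s + 1 := by exact_mod_cast hk
  rw [normalizedL, hk', lSeq_snoc _ (by omega), dfacZ_of_pos (by omega)]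
  congr 5 <;> omega

lemma tendsto_normalizedL_of_sum_eq_two_mul (hk : ∑ p, k p = 2 * s) :
    Tendsto (normalizedL m k) atTop (𝓝 (limitValue k)) := by
  have hlim : (if s = 0 then Lprod k 0 0 - Lprod k 1 1 else 0) = limitValue k := by
    rcases eq_or_ne s 0 with rfl | hs
    · have h0 : ∀ p, k p = 0 := by simpa using hk
      rw [if_pos rfl, Lprod_apply_sub_of_forall_eq_zero h0, limitValue, if_pos h0]
    · rw [if_neg hs, limitValue_of_two_le_sum (by omega)]
  rw [← hlim]
  refine ((tendsto_trace_mul_Lmat_even_div _ s).comp (tendsto_toNat_add_atTop (m - s))).congr' ?_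
  filter_upwards [eventually_ge_atTop ((s : ℤ) - m)] with g hg
  rw [Function.comp_apply, normalizedL_of_sum_eq_two_mul hk (by omega), add_sub_assoc]

lemma tendsto_normalizedL_of_sum_eq_two_mul_add_one (hk : ∑ p, k p = 2 * s + 1) :
    Tendsto (normalizedL m k) atTop (𝓝 (limitValue k)) := by
  have hlim : (if s = 0 then -Lprod k 1 0 else 0) = limitValue k := by
    rcases eq_or_ne s 0 with rfl | hs
    · have hne : ¬ ∀ p, k p = 0 := fun h => by simp [h] at hk
      rw [if_pos rfl, Lprod_apply_one_zero_of_sum_eq_one hk, limitValue, if_neg hne]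
      split_ifs <;> norm_num
    · rw [if_neg hs, limitValue_of_two_le_sum (by omega)]
  rw [← hlim]
  refine ((tendsto_trace_mul_Lmat_odd_div _ s).comp
    (tendsto_toNat_add_atTop (m - s - 1))).congr' ?_
  filter_upwards [eventually_ge_atTop ((s : ℤ) + 1 - m)] with g hg
  rw [Function.comp_apply, normalizedL_of_sum_eq_two_mul_add_one hk (by omega), add_sub_assoc,
    add_sub_assoc]

end

/-- Limit (2.23) in the paper (paper `n = m+2 ≥ 2`): for fixed nonnegative `k_1,…,k_{n−1}`,
`l_{k_1,…,k_{n−1},2g+2n−2−|k|}/(2g+2n−3)!!` converges as `g → ∞`, to `1` if all `k_p = 0`,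
to `−1` if `(k_1,…,k_{n−1}) = (1,0,…,0)`, and to `0` otherwise. -/
theorem lSeq_normalized_limit (m : ℕ) (k : Fin (m + 1) → ℕ) :
    Filter.Tendsto
      (fun g : ℤ =>
        lSeq (m + 2)
            (Fin.snoc (fun p => (k p : ℤ)) (2 * g + 2 * (m + 2 : ℕ) - 2 - ∑ p, (k p : ℤ))) /
          (dfacZ (2 * g + 2 * (m + 2 : ℕ) - 3) : ℝ))
      Filter.atTop
      (nhds (if ∀ p, k p = 0 then 1
        else if k 0 = 1 ∧ ∀ p, p ≠ 0 → k p = 0 then -1 else 0)) := by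
  obtain ⟨s, hs | hs⟩ := Nat.even_or_odd' (∑ p, k p)
  · exact tendsto_normalizedL_of_sum_eq_two_mul hs
  · exact tendsto_normalizedL_of_sum_eq_two_mul_add_one hs
end
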